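/- Let M be a finite-dimensional (α,β)-Yetter-Drinfeld module. Then M^◇ = F(M*) and ◇M = F(*M), where F is the functor from _H𝒴𝒟^H(β(β⁻¹α⁻¹), α(β⁻¹α⁻¹)) = _H𝒴𝒟^H(α⁻¹, αβ⁻¹α⁻¹) to _H𝒴𝒟^H(β, α) with twisting automorphism β⁻¹α⁻¹; concretely, M^◇ coincides with M* as a right H-comodule and its action is h → f = (αβ)(h)·f where · is the action of M*, and similarly ◇M coincides with *M with action h → f = (αβ)(h)·f. -/

import Mathlib

open TensorProduct

noncomputable section

namespace GYD

variable (k H : Type) [Field k] [Ring H] [HopfAlgebra k H]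

/-- `φ` is a Hopf algebra automorphism of `H` (a linear equivalence which is both an
algebra morphism and a coalgebra morphism). -/
def IsHopfAut (φ : H ≃ₗ[k] H) : Prop :=
  (∀ x y : H, φ (x * y) = φ x * φ y) ∧ (φ 1 = 1) ∧
  (∀ h : H, Coalgebra.comul (R := k) (φ h)
      = TensorProduct.map φ.toLinearMap φ.toLinearMap (Coalgebra.comul (R := k) h)) ∧
  (∀ h : H, Coalgebra.counit (R := k) (φ h) = Coalgebra.counit (R := k) h)

/-- `Sinv` is a two-sided inverse of the antipode of `H`. -/
def IsAntipodeInv (Sinv : H → H) : Prop :=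
  (∀ h : H, HopfAlgebra.antipode (R := k) (Sinv h) = h) ∧
  (∀ h : H, Sinv (HopfAlgebra.antipode (R := k) h) = h)

/-- The data `(act, coact)` makes `M` an `(α, β)`-Yetter-Drinfeld module over `H`:
`M` is a left `H`-module, a right `H`-comodule, and the compatibility
`(h·m)₍₀₎ ⊗ (h·m)₍₁₎ = h₂·m₍₀₎ ⊗ β(h₃) m₍₁₎ α(Sinv(h₁))` holds (expressed via
arbitrary finite representations of `(Δ ⊗ id)(Δ h)` and of `coact m`). -/
def IsYD (Sinv α β : H → H) {M : Type} [AddCommGroup M] [Module k M]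
    (act : H →ₗ[k] M →ₗ[k] M) (coact : M →ₗ[k] M ⊗[k] H) : Prop :=
  (∀ m : M, act 1 m = m) ∧
  (∀ (g h : H) (m : M), act (g * h) m = act g (act h m)) ∧
  (∀ m : M, LinearMap.rTensor H coact (coact m)
      = (TensorProduct.assoc k M H H).symm
          (LinearMap.lTensor M (Coalgebra.comul (R := k)) (coact m))) ∧
  (∀ m : M,
    TensorProduct.rid k M (LinearMap.lTensor M (Coalgebra.counit (R := k)) (coact m)) = m) ∧
  (∀ (h : H) (m : M) (s t : Finset ℕ) (a b c : ℕ → H) (m₀ : ℕ → M) (m₁ : ℕ → H),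
    LinearMap.rTensor H (Coalgebra.comul (R := k)) (Coalgebra.comul (R := k) h)
        = ∑ i ∈ s, (a i ⊗ₜ[k] b i) ⊗ₜ[k] c i →
    coact m = ∑ j ∈ t, m₀ j ⊗ₜ[k] m₁ j →
    coact (act h m) = ∑ i ∈ s, ∑ j ∈ t,
      act (b i) (m₀ j) ⊗ₜ[k] (β (c i) * m₁ j * α (Sinv (a i))))

/-- Characterization of the action `h · (m ⊗ n) = θ₁(h₁)·m ⊗ θ₂(h₂)·n` on `M ⊗ N`. -/
def TensorActChar (θ₁ θ₂ : H → H) {M N : Type} [AddCommGroup M] [Module k M]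
    [AddCommGroup N] [Module k N]
    (actM : H →ₗ[k] M →ₗ[k] M) (actN : H →ₗ[k] N →ₗ[k] N)
    (act : H →ₗ[k] (M ⊗[k] N) →ₗ[k] (M ⊗[k] N)) : Prop :=
  ∀ (h : H) (m : M) (n : N) (s : Finset ℕ) (p q : ℕ → H),
    Coalgebra.comul (R := k) h = ∑ i ∈ s, p i ⊗ₜ[k] q i →
    act h (m ⊗ₜ[k] n) = ∑ i ∈ s, actM (θ₁ (p i)) m ⊗ₜ[k] actN (θ₂ (q i)) n

/-- Characterization of the "type two" action `h · (m ⊗ n) = h₂·m ⊗ h₁·n` on `M ⊗ N`. -/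
def TensorActCharTwo {M N : Type} [AddCommGroup M] [Module k M]
    [AddCommGroup N] [Module k N]
    (actM : H →ₗ[k] M →ₗ[k] M) (actN : H →ₗ[k] N →ₗ[k] N)
    (act : H →ₗ[k] (M ⊗[k] N) →ₗ[k] (M ⊗[k] N)) : Prop :=
  ∀ (h : H) (m : M) (n : N) (s : Finset ℕ) (p q : ℕ → H),
    Coalgebra.comul (R := k) h = ∑ i ∈ s, p i ⊗ₜ[k] q i →
    act h (m ⊗ₜ[k] n) = ∑ i ∈ s, actM (q i) m ⊗ₜ[k] actN (p i) n

/-- Characterization of the coaction `m ⊗ n ↦ (m₍₀₎ ⊗ n₍₀₎) ⊗ n₍₁₎ m₍₁₎` on `M ⊗ N`. -/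
def TensorCoactChar {M N : Type} [AddCommGroup M] [Module k M]
    [AddCommGroup N] [Module k N]
    (coactM : M →ₗ[k] M ⊗[k] H) (coactN : N →ₗ[k] N ⊗[k] H)
    (coact : M ⊗[k] N →ₗ[k] (M ⊗[k] N) ⊗[k] H) : Prop :=
  ∀ (m : M) (n : N) (s t : Finset ℕ) (m₀ : ℕ → M) (m₁ : ℕ → H) (n₀ : ℕ → N) (n₁ : ℕ → H),
    coactM m = ∑ i ∈ s, m₀ i ⊗ₜ[k] m₁ i →
    coactN n = ∑ j ∈ t, n₀ j ⊗ₜ[k] n₁ j →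
    coact (m ⊗ₜ[k] n) = ∑ i ∈ s, ∑ j ∈ t, (m₀ i ⊗ₜ[k] n₀ j) ⊗ₜ[k] (n₁ j * m₁ i)

/-- Characterization of the "type two" coaction `m ⊗ n ↦ (m₍₀₎ ⊗ n₍₀₎) ⊗ m₍₁₎ n₍₁₎`. -/
def TensorCoactCharTwo {M N : Type} [AddCommGroup M] [Module k M]
    [AddCommGroup N] [Module k N]
    (coactM : M →ₗ[k] M ⊗[k] H) (coactN : N →ₗ[k] N ⊗[k] H)
    (coact : M ⊗[k] N →ₗ[k] (M ⊗[k] N) ⊗[k] H) : Prop :=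
  ∀ (m : M) (n : N) (s t : Finset ℕ) (m₀ : ℕ → M) (m₁ : ℕ → H) (n₀ : ℕ → N) (n₁ : ℕ → H),
    coactM m = ∑ i ∈ s, m₀ i ⊗ₜ[k] m₁ i →
    coactN n = ∑ j ∈ t, n₀ j ⊗ₜ[k] n₁ j →
    coact (m ⊗ₜ[k] n) = ∑ i ∈ s, ∑ j ∈ t, (m₀ i ⊗ₜ[k] n₀ j) ⊗ₜ[k] (m₁ i * n₁ j)

/-- Characterization of the action `(h · f)(m) = f (θ(h) · m)` on the dual space. -/
def DualActChar (θ : H → H) {M : Type} [AddCommGroup M] [Module k M]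
    (actM : H →ₗ[k] M →ₗ[k] M)
    (actD : H →ₗ[k] Module.Dual k M →ₗ[k] Module.Dual k M) : Prop :=
  ∀ (h : H) (f : Module.Dual k M) (m : M), actD h f m = f (actM (θ h) m)

/-- Characterization of the coaction `f₍₀₎(m) ⊗ f₍₁₎ = f(m₍₀₎) ⊗ σ(m₍₁₎)` on the dual space
(expressed through contraction against evaluation at each `m`). -/
def DualCoactChar (σ : H → H) {M : Type} [AddCommGroup M] [Module k M]
    (coactM : M →ₗ[k] M ⊗[k] H)
    (coactD : Module.Dual k M →ₗ[k] Module.Dual k M ⊗[k] H) : Prop :=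
  ∀ (f : Module.Dual k M) (m : M) (t : Finset ℕ) (m₀ : ℕ → M) (m₁ : ℕ → H),
    coactM m = ∑ j ∈ t, m₀ j ⊗ₜ[k] m₁ j →
    TensorProduct.lid k H (LinearMap.rTensor H (Module.Dual.eval k M m) (coactD f))
      = ∑ j ∈ t, f (m₀ j) • σ (m₁ j)

/-- Characterization of the action `(h · u)(m) = θ(h₁) · u (θ(S(h₂)) · m)` on `End(M)`. -/
def EndActChar (θ : H → H) {M : Type} [AddCommGroup M] [Module k M]
    (actM : H →ₗ[k] M →ₗ[k] M)
    (actE : H →ₗ[k] Module.End k M →ₗ[k] Module.End k M) : Prop :=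
  ∀ (h : H) (u : Module.End k M) (m : M) (s : Finset ℕ) (p q : ℕ → H),
    Coalgebra.comul (R := k) h = ∑ i ∈ s, p i ⊗ₜ[k] q i →
    actE h u m = ∑ i ∈ s,
      actM (θ (p i)) (u (actM (θ (HopfAlgebra.antipode (R := k) (q i))) m))

/-- Characterization of the coaction `u₍₀₎(m) ⊗ u₍₁₎ = u(m₍₀₎)₍₀₎ ⊗ Sinv(m₍₁₎) u(m₍₀₎)₍₁₎`
on `End(M)`, expressed through contraction against evaluation at each `m`. -/
def EndCoactChar (Sinv : H → H) {M : Type} [AddCommGroup M] [Module k M]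
    (coactM : M →ₗ[k] M ⊗[k] H)
    (coactE : Module.End k M →ₗ[k] Module.End k M ⊗[k] H) : Prop :=
  ∀ (u : Module.End k M) (m : M) (t : Finset ℕ) (m₀ : ℕ → M) (m₁ : ℕ → H)
    (r : ℕ → Finset ℕ) (n₀ : ℕ → ℕ → M) (n₁ : ℕ → ℕ → H),
    coactM m = ∑ j ∈ t, m₀ j ⊗ₜ[k] m₁ j →
    (∀ j ∈ t, coactM (u (m₀ j)) = ∑ l ∈ r j, n₀ j l ⊗ₜ[k] n₁ j l) →
    LinearMap.rTensor H (LinearMap.applyₗ (R := k) m) (coactE u)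
      = ∑ j ∈ t, ∑ l ∈ r j, n₀ j l ⊗ₜ[k] (Sinv (m₁ j) * n₁ j l)

/-- Characterization of the action `(h · u)(m) = θ(h₂) · u (θ(Sinv(h₁)) · m)` on `End(M)ᵒᵖ`. -/
def EndOpActChar (θ Sinv : H → H) {M : Type} [AddCommGroup M] [Module k M]
    (actM : H →ₗ[k] M →ₗ[k] M)
    (actE : H →ₗ[k] (Module.End k M)ᵐᵒᵖ →ₗ[k] (Module.End k M)ᵐᵒᵖ) : Prop :=
  ∀ (h : H) (u : (Module.End k M)ᵐᵒᵖ) (m : M) (s : Finset ℕ) (p q : ℕ → H),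
    Coalgebra.comul (R := k) h = ∑ i ∈ s, p i ⊗ₜ[k] q i →
    (actE h u).unop m = ∑ i ∈ s,
      actM (θ (q i)) (u.unop (actM (θ (Sinv (p i))) m))

/-- Characterization of the coaction `u₍₀₎(m) ⊗ u₍₁₎ = u(m₍₀₎)₍₀₎ ⊗ u(m₍₀₎)₍₁₎ S(m₍₁₎)`
on `End(M)ᵒᵖ`, expressed through contraction against evaluation at each `m`. -/
def EndOpCoactChar {M : Type} [AddCommGroup M] [Module k M]
    (coactM : M →ₗ[k] M ⊗[k] H)
    (coactE : (Module.End k M)ᵐᵒᵖ →ₗ[k] (Module.End k M)ᵐᵒᵖ ⊗[k] H) : Prop :=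
  ∀ (u : (Module.End k M)ᵐᵒᵖ) (m : M) (t : Finset ℕ) (m₀ : ℕ → M) (m₁ : ℕ → H)
    (r : ℕ → Finset ℕ) (n₀ : ℕ → ℕ → M) (n₁ : ℕ → ℕ → H),
    coactM m = ∑ j ∈ t, m₀ j ⊗ₜ[k] m₁ j →
    (∀ j ∈ t, coactM (u.unop (m₀ j)) = ∑ l ∈ r j, n₀ j l ⊗ₜ[k] n₁ j l) →
    LinearMap.rTensor H ((LinearMap.applyₗ (R := k) m).comp
        (MulOpposite.opLinearEquiv k).symm.toLinearMap) (coactE u)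
      = ∑ j ∈ t, ∑ l ∈ r j,
          n₀ j l ⊗ₜ[k] (n₁ j l * HopfAlgebra.antipode (R := k) (m₁ j))

/-- `A`, with the Yetter-Drinfeld structure `(act, coact)`, is an algebra in the braided
category of Yetter-Drinfeld modules over `H`. -/
def IsYDAlgebra (Sinv : H → H) {A : Type} [Ring A] [Algebra k A]
    (act : H →ₗ[k] A →ₗ[k] A) (coact : A →ₗ[k] A ⊗[k] H) : Prop :=
  IsYD k H Sinv id id act coact ∧
  (∀ (h : H) (a b : A) (s : Finset ℕ) (p q : ℕ → H),
    Coalgebra.comul (R := k) h = ∑ i ∈ s, p i ⊗ₜ[k] q i →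
    act h (a * b) = ∑ i ∈ s, act (p i) a * act (q i) b) ∧
  (∀ h : H, act h 1 = Coalgebra.counit (R := k) h • (1 : A)) ∧
  (coact 1 = (1 : A) ⊗ₜ[k] (1 : H)) ∧
  (∀ (a b : A) (s t : Finset ℕ) (a₀ : ℕ → A) (a₁ : ℕ → H) (b₀ : ℕ → A) (b₁ : ℕ → H),
    coact a = ∑ i ∈ s, a₀ i ⊗ₜ[k] a₁ i →
    coact b = ∑ j ∈ t, b₀ j ⊗ₜ[k] b₁ j →
    coact (a * b) = ∑ i ∈ s, ∑ j ∈ t, (a₀ i * b₀ j) ⊗ₜ[k] (b₁ j * a₁ i))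

/-- Characterization of the smash product multiplication
`(a # b)(a' # b') = a a'₍₀₎ # (a'₍₁₎ · b) b'` on `A ⊗ B`. -/
def SmashMulChar {A B : Type} [Ring A] [Algebra k A] [Ring B] [Algebra k B]
    (actB : H →ₗ[k] B →ₗ[k] B) (coactA : A →ₗ[k] A ⊗[k] H)
    (mul : (A ⊗[k] B) →ₗ[k] (A ⊗[k] B) →ₗ[k] (A ⊗[k] B)) : Prop :=
  ∀ (a a' : A) (b b' : B) (t : Finset ℕ) (a₀ : ℕ → A) (a₁ : ℕ → H),
    coactA a' = ∑ j ∈ t, a₀ j ⊗ₜ[k] a₁ j →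
    mul (a ⊗ₜ[k] b) (a' ⊗ₜ[k] b') = ∑ j ∈ t, (a * a₀ j) ⊗ₜ[k] (actB (a₁ j) b * b')

end GYD

/-!
A bialgebra map `f` between Hopf algebras commutes with the antipodes, because `f ∘ S` and
`S ∘ f` are a left and a right inverse of `f` in the convolution monoid. So `αβ` commutes with `S`
and with `S⁻¹`, which turns the action `f ↦ f(β⁻¹α⁻¹(S(αβ h)) · -)` of `M*` twisted by `αβ` into
the action `f ↦ f(S(h) · -)` of `M^◇`, and likewise for `◇M`. The coactions are given by the same
formula on both sides; they agree because `M* ⊗ H ≅ Hom(M, H)` for finite-dimensional `M`, so an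
element of `M* ⊗ H` is determined by its contractions with the points of `M`.
-/

section

open HopfAlgebra WithConv

theorem BialgHom.antipode_comp {R A C : Type*} [CommSemiring R] [Semiring A] [HopfAlgebra R A]
    [Semiring C] [HopfAlgebra R C] (f : A →ₐc[R] C) :
    antipode R ∘ₗ (f : A →ₗ[R] C) = (f : A →ₗ[R] C) ∘ₗ antipode R := by
  have hleft : toConv ((f : A →ₗ[R] C) ∘ₗ antipode R) * toConv (f : A →ₗ[R] C) = 1 :=
    calc _ = toConv ((f : A →ₐ[R] C).toLinearMap ∘ₗ
          (toConv (antipode R) * toConv (LinearMap.id : A →ₗ[R] A)).ofConv) := by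
          rw [LinearMap.algHom_comp_convMul_distrib]; rfl
      _ = 1 := by rw [LinearMap.antipode_mul_id]; ext; simp [AlgHomClass.commutes]
  have hright : toConv (f : A →ₗ[R] C) * toConv (antipode R ∘ₗ (f : A →ₗ[R] C)) = 1 :=
    calc _ = toConv ((toConv (LinearMap.id : C →ₗ[R] C) * toConv (antipode R)).ofConv ∘ₗ
          (f : A →ₗc[R] C).toLinearMap) := by
          rw [LinearMap.convMul_comp_coalgHom_distrib]; rfl
      _ = 1 := by rw [LinearMap.id_mul_antipode]; ext; simp
  exact congrArg ofConv (left_inv_eq_right_inv hleft hright).symm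

end

theorem TensorProduct.exists_finset_nat_sum_tmul {R M N : Type*} [CommSemiring R]
    [AddCommMonoid M] [Module R M] [AddCommMonoid N] [Module R N] (x : M ⊗[R] N) :
    ∃ (t : Finset ℕ) (a : ℕ → M) (b : ℕ → N), x = ∑ j ∈ t, a j ⊗ₜ[R] b j := by
  classical
  obtain ⟨S, rfl⟩ := TensorProduct.exists_finset x
  let e := S.equivFin.symm
  refine ⟨Finset.range S.card, fun j => if h : j < S.card then (e ⟨j, h⟩).1.1 else 0,
    fun j => if h : j < S.card then (e ⟨j, h⟩).1.2 else 0, ?_⟩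
  rw [Finset.sum_range, ← Finset.sum_coe_sort S, ← e.sum_comp]
  simp

theorem TensorProduct.lid_rTensor_dual_eval {R M N : Type*} [CommSemiring R]
    [AddCommMonoid M] [Module R M] [AddCommMonoid N] [Module R N]
    (y : Module.Dual R M ⊗[R] N) (m : M) :
    TensorProduct.lid R N (LinearMap.rTensor N (Module.Dual.eval R M m) y)
      = dualTensorHom R M N y m := by
  induction y using TensorProduct.induction_on <;> simp_all

namespace GYD

variable {k H : Type} [Field k] [Ring H] [HopfAlgebra k H]

def IsHopfAut.toBialgHom {φ : H ≃ₗ[k] H} (hφ : IsHopfAut k H φ) : H →ₐc[k] H where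
  toLinearMap := φ.toLinearMap
  counit_comp := LinearMap.ext hφ.2.2.2
  map_comp_comul := LinearMap.ext fun h => (hφ.2.2.1 h).symm
  map_one' := hφ.2.1
  map_mul' := hφ.1

theorem IsHopfAut.antipode_apply {φ : H ≃ₗ[k] H} (hφ : IsHopfAut k H φ) (h : H) :
    HopfAlgebra.antipode k (φ h) = φ (HopfAlgebra.antipode k h) :=
  LinearMap.congr_fun (BialgHom.antipode_comp hφ.toBialgHom) h

theorem IsHopfAut.antipodeInv_apply {Sinv : H → H} (hS : IsAntipodeInv k H Sinv)
    {φ : H ≃ₗ[k] H} (hφ : IsHopfAut k H φ) (h : H) : Sinv (φ h) = φ (Sinv h) :=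
  calc Sinv (φ h) = Sinv (HopfAlgebra.antipode k (φ (Sinv h))) := by
        rw [hφ.antipode_apply, hS.1]
    _ = φ (Sinv h) := hS.2 _

variable {M : Type} [AddCommGroup M] [Module k M] {actM : H →ₗ[k] M →ₗ[k] M}

theorem DualActChar.apply_eq_of_comp {θ θ' ψ : H → H}
    {act act' : H →ₗ[k] Module.Dual k M →ₗ[k] Module.Dual k M}
    (hact : DualActChar k H θ actM act) (hact' : DualActChar k H θ' actM act')
    (hψ : ∀ h, θ' (ψ h) = θ h) (h : H) (f : Module.Dual k M) : act h f = act' (ψ h) f :=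
  LinearMap.ext fun m => by rw [hact, hact', hψ]

theorem DualCoactChar.unique [FiniteDimensional k M] {σ : H → H} {coactM : M →ₗ[k] M ⊗[k] H}
    {coact coact' : Module.Dual k M →ₗ[k] Module.Dual k M ⊗[k] H}
    (hcoact : DualCoactChar k H σ coactM coact) (hcoact' : DualCoactChar k H σ coactM coact') :
    coact = coact' := by
  ext1 f
  apply (dualTensorHom_bijective (R := k) (M := M) (N := H)).injective
  ext m
  obtain ⟨t, m₀, m₁, hm⟩ := TensorProduct.exists_finset_nat_sum_tmul (coactM m)
  rw [← TensorProduct.lid_rTensor_dual_eval, ← TensorProduct.lid_rTensor_dual_eval,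
    hcoact f m t m₀ m₁ hm, hcoact' f m t m₀ m₁ hm]

end GYD

theorem statement_5_general
    (k H : Type) [Field k] [Ring H] [HopfAlgebra k H]
    (Sinv : H → H) (hS : GYD.IsAntipodeInv k H Sinv)
    (α β : H ≃ₗ[k] H)
    (hα : GYD.IsHopfAut k H α) (hβ : GYD.IsHopfAut k H β)
    (M : Type) [AddCommGroup M] [Module k M] [FiniteDimensional k M]
    (actM : H →ₗ[k] M →ₗ[k] M) (coactM : M →ₗ[k] M ⊗[k] H)
    (actD : H →ₗ[k] Module.Dual k M →ₗ[k] Module.Dual k M)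
    (coactD : Module.Dual k M →ₗ[k] Module.Dual k M ⊗[k] H)
    (hactD : GYD.DualActChar k H (fun h => HopfAlgebra.antipode (R := k) h) actM actD)
    (hcoactD : GYD.DualCoactChar k H Sinv coactM coactD)
    (actStar : H →ₗ[k] Module.Dual k M →ₗ[k] Module.Dual k M)
    (coactStar : Module.Dual k M →ₗ[k] Module.Dual k M ⊗[k] H)
    (hactStar : GYD.DualActChar k H
      (fun h => β.symm (α.symm (HopfAlgebra.antipode (R := k) h))) actM actStar)
    (hcoactStar : GYD.DualCoactChar k H Sinv coactM coactStar)
    (actD' : H →ₗ[k] Module.Dual k M →ₗ[k] Module.Dual k M)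
    (coactD' : Module.Dual k M →ₗ[k] Module.Dual k M ⊗[k] H)
    (hactD' : GYD.DualActChar k H Sinv actM actD')
    (hcoactD' : GYD.DualCoactChar k H (fun h => HopfAlgebra.antipode (R := k) h) coactM coactD')
    (actStar' : H →ₗ[k] Module.Dual k M →ₗ[k] Module.Dual k M)
    (coactStar' : Module.Dual k M →ₗ[k] Module.Dual k M ⊗[k] H)
    (hactStar' : GYD.DualActChar k H (fun h => β.symm (α.symm (Sinv h))) actM actStar')
    (hcoactStar' : GYD.DualCoactChar k H
      (fun h => HopfAlgebra.antipode (R := k) h) coactM coactStar') :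
    (∀ (h : H) (f : Module.Dual k M), actD h f = actStar (α (β h)) f) ∧
    coactD = coactStar ∧
    (∀ (h : H) (f : Module.Dual k M), actD' h f = actStar' (α (β h)) f) ∧
    coactD' = coactStar' := by
  have hS_conj : ∀ h : H, β.symm (α.symm (HopfAlgebra.antipode k (α (β h))))
      = HopfAlgebra.antipode k h := fun h => by
    rw [hα.antipode_apply, α.symm_apply_apply, hβ.antipode_apply, β.symm_apply_apply]
  have hSinv_conj : ∀ h : H, β.symm (α.symm (Sinv (α (β h)))) = Sinv h := fun h => by
    rw [hα.antipodeInv_apply hS, α.symm_apply_apply, hβ.antipodeInv_apply hS,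
      β.symm_apply_apply]
  exact ⟨hactD.apply_eq_of_comp hactStar hS_conj, hcoactD.unique hcoactStar,
    hactD'.apply_eq_of_comp hactStar' hSinv_conj, hcoactD'.unique hcoactStar'⟩

theorem statement_5
    (k H : Type) [Field k] [Ring H] [HopfAlgebra k H]
    (Sinv : H → H) (hS : GYD.IsAntipodeInv k H Sinv)
    (α β : H ≃ₗ[k] H)
    (hα : GYD.IsHopfAut k H α) (hβ : GYD.IsHopfAut k H β)
    (M : Type) [AddCommGroup M] [Module k M] [FiniteDimensional k M]
    (actM : H →ₗ[k] M →ₗ[k] M) (coactM : M →ₗ[k] M ⊗[k] H)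
    (hM : GYD.IsYD k H Sinv ⇑α ⇑β actM coactM)
    (actD : H →ₗ[k] Module.Dual k M →ₗ[k] Module.Dual k M)
    (coactD : Module.Dual k M →ₗ[k] Module.Dual k M ⊗[k] H)
    (hactD : GYD.DualActChar k H (fun h => HopfAlgebra.antipode (R := k) h) actM actD)
    (hcoactD : GYD.DualCoactChar k H Sinv coactM coactD)
    (actStar : H →ₗ[k] Module.Dual k M →ₗ[k] Module.Dual k M)
    (coactStar : Module.Dual k M →ₗ[k] Module.Dual k M ⊗[k] H)
    (hactStar : GYD.DualActChar k H
      (fun h => β.symm (α.symm (HopfAlgebra.antipode (R := k) h))) actM actStar)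
    (hcoactStar : GYD.DualCoactChar k H Sinv coactM coactStar)
    (actD' : H →ₗ[k] Module.Dual k M →ₗ[k] Module.Dual k M)
    (coactD' : Module.Dual k M →ₗ[k] Module.Dual k M ⊗[k] H)
    (hactD' : GYD.DualActChar k H Sinv actM actD')
    (hcoactD' : GYD.DualCoactChar k H (fun h => HopfAlgebra.antipode (R := k) h) coactM coactD')
    (actStar' : H →ₗ[k] Module.Dual k M →ₗ[k] Module.Dual k M)
    (coactStar' : Module.Dual k M →ₗ[k] Module.Dual k M ⊗[k] H)
    (hactStar' : GYD.DualActChar k H (fun h => β.symm (α.symm (Sinv h))) actM actStar')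
    (hcoactStar' : GYD.DualCoactChar k H
      (fun h => HopfAlgebra.antipode (R := k) h) coactM coactStar') :
    (∀ (h : H) (f : Module.Dual k M), actD h f = actStar (α (β h)) f) ∧
    coactD = coactStar ∧
    (∀ (h : H) (f : Module.Dual k M), actD' h f = actStar' (α (β h)) f) ∧
    coactD' = coactStar' :=
  statement_5_general k H Sinv hS α β hα hβ M actM coactM actD coactD hactD hcoactD actStar
    coactStar hactStar hcoactStar actD' coactD' hactD' hcoactD' actStar' coactStar' hactStar'
    hcoactStar'

end
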